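/- Let q : ℕ → ℝ satisfy q j > 0 for every j. If the family j ↦ (q j − 1)² is summable, then the family j ↦ log((√(q j) + 1/√(q j))/2) is summable (each term is nonnegative since t + t⁻¹ ≥ 2 for t > 0); equivalently, the infinite product ∏_j (√(q j) + 1/√(q j))/2 converges. -/

import Mathlib

/-!
By AM-GM, `(t + 1/t)/2 - 1 = (t - 1)²/(2t) ≥ 0`, so with `t = √x` and `log y ≤ y - 1` the term
`log((√x + 1/√x)/2)` lies between `0` and `(√x - 1)²/(2√x) = (x - 1)²/(2√x (√x + 1)²)`, which is at
most `(x - 1)²` once `x ≥ 1/4`. Summability of `(q j - 1)²` forces `q j → 1`, so this comparison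
holds for all but finitely many `j`.
-/

open Real Filter

lemma add_one_div_div_two_sub_one {t : ℝ} (ht : t ≠ 0) :
    (t + 1 / t) / 2 - 1 = (t - 1) ^ 2 / (2 * t) := by
  field_simp
  ring

lemma one_le_add_one_div_div_two {t : ℝ} (ht : 0 < t) : 1 ≤ (t + 1 / t) / 2 := by
  have h := add_one_div_div_two_sub_one ht.ne'
  have : 0 ≤ (t - 1) ^ 2 / (2 * t) := by positivity
  linarith

lemma abs_log_sqrt_add_one_div_sqrt_le {x : ℝ} (hx : 1 / 4 ≤ x) :
    |log ((√x + 1 / √x) / 2)| ≤ (x - 1) ^ 2 := by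
  have ht : 1 / 2 ≤ √x := (le_sqrt (by norm_num) (by linarith)).2 (by linarith)
  have ht₀ : 0 < √x := by linarith
  have hlow := one_le_add_one_div_div_two ht₀
  have hx_sq : (x - 1) ^ 2 = (√x - 1) ^ 2 * (√x + 1) ^ 2 := by
    rw [← mul_pow]
    congr 1
    linear_combination -sq_sqrt (show 0 ≤ x by linarith)
  rw [abs_of_nonneg (log_nonneg hlow)]
  calc log ((√x + 1 / √x) / 2)
      ≤ (√x + 1 / √x) / 2 - 1 := log_le_sub_one_of_pos (by linarith)
    _ = (√x - 1) ^ 2 / (2 * √x) := add_one_div_div_two_sub_one ht₀.ne'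
    _ ≤ (√x - 1) ^ 2 * (√x + 1) ^ 2 := by
      rw [div_le_iff₀ (by positivity)]
      have : 1 ≤ (√x + 1) ^ 2 * (2 * √x) := by nlinarith
      nlinarith [sq_nonneg (√x - 1)]
    _ = (x - 1) ^ 2 := hx_sq.symm

lemma eventually_one_div_four_le_of_summable_sq {ι : Type*} {q : ι → ℝ}
    (h : Summable fun j => (q j - 1) ^ 2) : ∀ᶠ j in cofinite, 1 / 4 ≤ q j := by
  filter_upwards [h.tendsto_cofinite_zero.eventually (gt_mem_nhds (by norm_num : (0 : ℝ) < 9 / 16))]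
    with j hj
  nlinarith

theorem log_summable_of_sq_summable (q : ℕ → ℝ)
    (h : Summable fun j => (q j - 1) ^ 2) :
    Summable (fun j => Real.log ((Real.sqrt (q j) + 1 / Real.sqrt (q j)) / 2)) ∧
      Multipliable (fun j => (Real.sqrt (q j) + 1 / Real.sqrt (q j)) / 2) := by
  have hq := eventually_one_div_four_le_of_summable_sq h
  have hlog : Summable fun j => log ((√(q j) + 1 / √(q j)) / 2) :=
    h.of_norm_bounded_eventually (hq.mono fun j hj => abs_log_sqrt_add_one_div_sqrt_le hj)
  refine ⟨hlog, multipliable_of_summable_log' (hq.mono fun j hj => ?_) hlog⟩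
  exact one_pos.trans_le (one_le_add_one_div_div_two (sqrt_pos.2 (by linarith)))
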